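/- Assume Dickson's conjecture (D). Let b_0 < b_1 < ... < b_{n-1} be an increasing sequence of natural numbers such that there is no prime p for which the residues {b_i mod p : i < n} cover all of ℤ/pℤ. Then there are infinitely many natural numbers x such that x + b_0, ..., x + b_{n-1} are consecutive primes (i.e., each x + b_i is prime and no integer strictly between x + b_0 and x + b_{n-1} other than the x + b_i is prime). -/

import Mathlib

/-!
For each gap `c` strictly between `b 0` and `b (n - 1)` that is not one of the `b i`, pick a
prime `p c` larger than every `b i` and every gap, distinct primes for distinct gaps, and by the
Chinese remainder theorem a shift `r` with `p c ∣ r + c` for all gaps. With `M = ∏ p c`, the forms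
`M * m + (r + b i)` still satisfy Dickson's condition: a prime dividing `M` divides none of the
`r + b i`, and a prime not dividing `M` leaves some residue uncovered. Dickson's conjecture then
makes all `x + b i` prime for infinitely many `x = M * m + r`, while each `x + c` is a proper
multiple of `p c`.
-/

def DicksonConjecture : Prop :=
  ∀ (k : ℕ) (a b : ℕ → ℤ), (∀ i < k, 1 ≤ a i) →
    (¬ ∃ n : ℤ, 1 < n ∧ ∀ s : ℤ, n ∣ ∏ i ∈ Finset.range k, (a i * s + b i)) →
    {m : ℕ | ∀ i < k, Prime (a i * m + b i)}.Infinite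

theorem not_exists_fixed_divisor_of_forall_prime {P : ℤ → ℤ}
    (h : ∀ q : ℕ, q.Prime → ∃ s, ¬ (q : ℤ) ∣ P s) :
    ¬ ∃ N : ℤ, 1 < N ∧ ∀ s, N ∣ P s := by
  rintro ⟨N, hN, hdvd⟩
  obtain ⟨s, hs⟩ := h _ (Nat.minFac_prime (show N.natAbs ≠ 1 by omega))
  exact hs ((Int.natCast_dvd.mpr (Nat.minFac_dvd _)).trans (hdvd s))

theorem exists_not_dvd_prod_linear {q : ℕ} [Fact q.Prime] {n : ℕ} (M : ℤ) (c : ℕ → ℤ)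
    {t : ZMod q} (ht : ∀ i < n, (c i : ZMod q) ≠ t)
    (hM : (q : ℤ) ∣ M → ∀ i < n, ¬ (q : ℤ) ∣ c i) :
    ∃ s : ℤ, ¬ (q : ℤ) ∣ ∏ i ∈ Finset.range n, (M * s + c i) := by
  by_cases hqM : (q : ℤ) ∣ M
  · refine ⟨0, fun hdvd => ?_⟩
    obtain ⟨i, hi, hqi⟩ := ((Nat.prime_iff_prime_int.mp Fact.out).dvd_finsetProd_iff _).mp hdvd
    exact hM hqM i (Finset.mem_range.mp hi) (by simpa using hqi)
  · have hM0 : (M : ZMod q) ≠ 0 := by rwa [Ne, ZMod.intCast_zmod_eq_zero_iff_dvd]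
    refine ⟨((M : ZMod q)⁻¹ * -t).val, ?_⟩
    rw [← ZMod.intCast_zmod_eq_zero_iff_dvd]
    push_cast
    rw [ZMod.natCast_val, ZMod.cast_id', id, ← mul_assoc, mul_inv_cancel₀ hM0,
      Finset.prod_eq_zero_iff]
    rintro ⟨i, hi, h0⟩
    exact ht i (Finset.mem_range.mp hi) (by linear_combination h0)

theorem exists_modulus_sieving_gaps (n : ℕ) (b : ℕ → ℕ) (G : Finset ℕ)
    (hG : ∀ c ∈ G, ∀ i < n, b i ≠ c) :
    ∃ M r : ℕ, 0 < M ∧ (∀ q, q.Prime → q ∣ M → ∀ i < n, ¬ q ∣ r + b i) ∧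
      ∀ c ∈ G, ∃ p, p.Prime ∧ p ∣ M ∧ p ∣ r + c := by
  set K := ∑ i ∈ Finset.range n, b i
  set p : ℕ → ℕ := fun c => Nat.nth Nat.Prime (K + c + 1)
  have hnth := Nat.nth_strictMono Nat.infinite_setOfPred_prime
  have hp c : (p c).Prime := Nat.nth_mem_of_infinite Nat.infinite_setOfPred_prime _
  have hpgt c : K + c < p c := hnth.le_apply
  have hpinj : p.Injective := fun c d h => by simpa using hnth.injective h
  have hcop : Set.Pairwise G (Function.onFun Nat.Coprime p) := fun c _ d _ hcd =>
    (Nat.coprime_primes (hp c) (hp d)).mpr (hpinj.ne hcd)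
  obtain ⟨r, hr⟩ :=
    Nat.chineseRemainderOfFinset (fun c => p c - c) p G (fun c _ => (hp c).ne_zero) hcop
  have hrc : ∀ c ∈ G, r + c ≡ 0 [MOD p c] := fun c hc => by
    have := (hr c hc).add_right c
    rw [Nat.sub_add_cancel (by grind)] at this
    exact this.trans (Nat.modEq_zero_iff_dvd.mpr dvd_rfl)
  refine ⟨∏ c ∈ G, p c, r, Finset.prod_pos fun c _ => (hp c).pos, ?_, fun c hc =>
    ⟨p c, hp c, Finset.dvd_prod_of_mem p hc, Nat.modEq_zero_iff_dvd.mp (hrc c hc)⟩⟩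
  intro q hq hqM i hi hqi
  obtain ⟨c, hc, hqc⟩ := (hq.prime.dvd_finsetProd_iff _).mp hqM
  rw [(Nat.prime_dvd_prime_iff_eq hq (hp c)).mp hqc] at hqi
  have hbi : b i ≤ K := Finset.single_le_sum (fun _ _ => Nat.zero_le _) (Finset.mem_range.mpr hi)
  have hcong : b i ≡ c [MOD p c] :=
    Nat.ModEq.add_left_cancel' r ((Nat.modEq_zero_iff_dvd.mpr hqi).trans (hrc c hc).symm)
  exact hG c hc i hi (hcong.eq_of_lt_of_lt (by grind) (by grind))

theorem DicksonConjecture.infinite_setOf_prime_and_not_prime (hD : DicksonConjecture)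
    {n : ℕ} {b : ℕ → ℕ}
    (hres : ¬ ∃ p : ℕ, p.Prime ∧ ∀ r : ZMod p, ∃ i < n, (b i : ZMod p) = r)
    (G : Finset ℕ) (hG : ∀ c ∈ G, ∀ i < n, b i ≠ c) :
    {x : ℕ | (∀ i < n, (x + b i).Prime) ∧ ∀ c ∈ G, ¬ (x + c).Prime}.Infinite := by
  push Not at hres
  obtain ⟨M, r, hM, hsafe, hsieve⟩ := exists_modulus_sieving_gaps n b G hG
  have hS : {m : ℕ | ∀ i < n, Prime ((M : ℤ) * m + ((r + b i : ℕ) : ℤ))}.Infinite := by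
    refine hD n (fun _ => M) (fun i => ((r + b i : ℕ) : ℤ)) (fun _ _ => by exact_mod_cast hM) ?_
    refine not_exists_fixed_divisor_of_forall_prime fun q hq => ?_
    have := Fact.mk hq
    obtain ⟨t, ht⟩ := hres q hq
    refine exists_not_dvd_prod_linear (t := r + t) _ _ (fun i hi h => ht i hi ?_) ?_
    · push_cast at h
      exact add_left_cancel h
    · intro hqM i hi hqi
      exact hsafe q hq (Int.natCast_dvd_natCast.mp hqM) i hi (Int.natCast_dvd_natCast.mp hqi)
  have hinj : Function.Injective fun m => M * m + r := fun m₁ m₂ h =>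
    Nat.eq_of_mul_eq_mul_left hM (Nat.add_right_cancel h)
  refine ((hS.sdiff (Set.finite_Iio 2)).image hinj.injOn).mono ?_
  rintro _ ⟨m, ⟨hm, hm2⟩, rfl⟩
  simp only [Set.mem_ofPred_eq, Set.mem_Iio, not_lt] at hm hm2 ⊢
  refine ⟨fun i hi => Nat.prime_iff_prime_int.mpr (by simpa only [Nat.cast_add, Nat.cast_mul, add_assoc] using hm i hi), ?_⟩
  intro c hc hprime
  obtain ⟨p, hp, hpM, hpr⟩ := hsieve c hc
  have hpx : p ∣ M * m + r + c := by
    rw [add_assoc]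
    exact (hpM.mul_right m).add hpr
  have hpeq := (Nat.prime_dvd_prime_iff_eq hp hprime).mp hpx
  have hpleM := Nat.le_of_dvd hM hpM
  have h2M : 2 * M ≤ M * m := by rw [mul_comm]; exact Nat.mul_le_mul_left M hm2
  omega

theorem consecutive_primes_pattern_general
    (hD : ∀ (k : ℕ) (a b : ℕ → ℤ), (∀ i < k, 1 ≤ a i) →
      (¬ ∃ n : ℤ, 1 < n ∧ ∀ s : ℤ, n ∣ ∏ i ∈ Finset.range k, (a i * s + b i)) →
      {m : ℕ | ∀ i < k, Prime (a i * m + b i)}.Infinite)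
    (n : ℕ) (b : ℕ → ℕ)
    (hres : ¬ ∃ p : ℕ, p.Prime ∧ ∀ r : ZMod p, ∃ i < n, (b i : ZMod p) = r) :
    {x : ℕ | (∀ i < n, Nat.Prime (x + b i)) ∧
      ∀ y : ℕ, x + b 0 < y → y < x + b (n - 1) → Nat.Prime y →
        ∃ i < n, y = x + b i}.Infinite := by
  set gaps := (Finset.Ioo (b 0) (b (n - 1))).filter fun c => ∀ i < n, b i ≠ c
  refine (DicksonConjecture.infinite_setOf_prime_and_not_prime hD hres gaps
    fun c hc => (Finset.mem_filter.mp hc).2).mono ?_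
  rintro x ⟨hprime, hcomposite⟩
  refine ⟨hprime, fun y hy₀ hy₁ hy => ?_⟩
  by_contra! hne
  have hgap : y - x ∈ gaps := Finset.mem_filter.mpr
    ⟨Finset.mem_Ioo.mpr ⟨by omega, by omega⟩, fun i hi h => hne i hi (by omega)⟩
  exact hcomposite _ hgap (by rwa [Nat.add_sub_cancel' (by omega)])

/-- Assuming Dickson's conjecture, if b_0 < ... < b_{n-1} is a sequence of naturals whose
residues never cover all of ℤ/pℤ for any prime p, then there are infinitely many x such that
x + b_0, ..., x + b_{n-1} are consecutive primes. -/
theorem consecutive_primes_pattern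
    (hD : ∀ (k : ℕ) (a b : ℕ → ℤ), (∀ i < k, 1 ≤ a i) →
      (¬ ∃ n : ℤ, 1 < n ∧ ∀ s : ℤ, n ∣ ∏ i ∈ Finset.range k, (a i * s + b i)) →
      {m : ℕ | ∀ i < k, Prime (a i * m + b i)}.Infinite)
    (n : ℕ) (hn : 1 ≤ n) (b : ℕ → ℕ)
    (hmono : ∀ i j, i < j → j < n → b i < b j)
    (hres : ¬ ∃ p : ℕ, p.Prime ∧ ∀ r : ZMod p, ∃ i < n, (b i : ZMod p) = r) :
    {x : ℕ | (∀ i < n, Nat.Prime (x + b i)) ∧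
      ∀ y : ℕ, x + b 0 < y → y < x + b (n - 1) → Nat.Prime y →
        ∃ i < n, y = x + b i}.Infinite :=
  consecutive_primes_pattern_general hD n b hres
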